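/- arXiv:2308.07621 — 2 statements merged into one kernel-verified Lean document; each statement's English description precedes it below -/
import Mathlib

section
/- Let ρ > 0 and let q = (q_n)_{n∈ℤ²} be a complex sequence with ‖q‖_ρ := Σ_{n∈ℤ²} e^{ρ|n|}|q_n| < ∞. For d ∈ ℤ² define A(d) := Σ_{j,m∈ℤ², j−m=d} q_j conj(q_m) and B(d) := Σ_{i,j∈ℤ², i+j=d} q_i q_j. Then both sums converge absolutely and satisfy the exponential decay bounds |A(d)| ≤ e^{−ρ|d|}‖q‖_ρ² and |B(d)| ≤ e^{−ρ|d|}‖q‖_ρ². Consequently, the partial derivatives of the cubic map (Qq)_n := Σ_{i+j−m=n} q_i q_j conj(q_m), namely ∂(Qq)_n/∂q_m = 2A(n−m) and ∂(Qq)_n/∂conj(q_m) = B(n+m), depend only on n−m and n+m respectively; in particular for any c ∈ ℤ² the quantities ∂(Qq)_{n+tc}/∂q_{m+tc} and ∂(Qq)_{n+tc}/∂conj(q_{m−tc}) are independent of t ∈ ℤ, so the limits as t → ∞ required by the Töplitz–Lipschitz property exist and obey the bounds 2e^{−ρ|n−m|}‖q‖_ρ² and e^{−ρ|n+m|}‖q‖_ρ².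 -/
/-- The Euclidean norm `|n| = √(n₁² + n₂²)` of a lattice point `n ∈ ℤ²`. -/
noncomputable def latNorm (n : ℤ × ℤ) : ℝ :=
  Real.sqrt ((n.1 : ℝ) ^ 2 + (n.2 : ℝ) ^ 2)

/-- The weighted norm `‖q‖_ρ = Σ_{n∈ℤ²} e^{ρ|n|} |q_n|`. -/
noncomputable def wnorm (ρ : ℝ) (q : ℤ × ℤ → ℂ) : ℝ :=
  ∑' n : ℤ × ℤ, Real.exp (ρ * latNorm n) * ‖q n‖

/-- `A(d) = Σ_{j−m=d} q_j conj(q_m)`, parametrized by the free index `j` with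
`m = j − d`.  One has `∂(Qq)_n/∂q_m = 2 A(n−m)`. -/
noncomputable def Aq (q : ℤ × ℤ → ℂ) (d : ℤ × ℤ) : ℂ :=
  ∑' j : ℤ × ℤ, q j * (starRingEnd ℂ) (q (j - d))

/-- `B(d) = Σ_{i+j=d} q_i q_j`, parametrized by the free index `i` with
`j = d − i`.  One has `∂(Qq)_n/∂conj(q_m) = B(n+m)`. -/
noncomputable def Bq (q : ℤ × ℤ → ℂ) (d : ℤ × ℤ) : ℂ :=
  ∑' i : ℤ × ℤ, q i * q (d - i)

lemma latNorm_eq (n : ℤ × ℤ) :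
    latNorm n = ‖((n.1 : ℝ) + (n.2 : ℝ) * Complex.I : ℂ)‖ := by
  rw [Complex.norm_add_mul_I]; rfl

lemma latNorm_nonneg (n : ℤ × ℤ) : 0 ≤ latNorm n := Real.sqrt_nonneg _

lemma latNorm_sub_le (a b : ℤ × ℤ) : latNorm (a - b) ≤ latNorm a + latNorm b := by
  simp only [latNorm_eq]
  have h : (((a - b).1 : ℝ) + ((a - b).2 : ℝ) * Complex.I : ℂ)
      = (((a.1 : ℝ) + (a.2 : ℝ) * Complex.I) - ((b.1 : ℝ) + (b.2 : ℝ) * Complex.I)) := by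
    simp [Prod.fst_sub, Prod.snd_sub]; ring
  rw [h]; exact norm_sub_le _ _

lemma latNorm_add_le (a b : ℤ × ℤ) : latNorm (a + b) ≤ latNorm a + latNorm b := by
  simp only [latNorm_eq]
  have h : (((a + b).1 : ℝ) + ((a + b).2 : ℝ) * Complex.I : ℂ)
      = (((a.1 : ℝ) + (a.2 : ℝ) * Complex.I) + ((b.1 : ℝ) + (b.2 : ℝ) * Complex.I)) := by
    simp [Prod.fst_add, Prod.snd_add]; ring
  rw [h]; exact norm_add_le _ _

lemma wnorm_nonneg (ρ : ℝ) (q : ℤ × ℤ → ℂ) : 0 ≤ wnorm ρ q :=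
  tsum_nonneg fun n => by positivity

/-- The key term bound: if `|d| ≤ |j| + |k|` then
`‖q j‖ ‖q k‖ ≤ e^{-ρ|d|} (e^{ρ|j|}‖q j‖) ‖q‖_ρ`. -/
lemma term_bound (ρ : ℝ) (hρ : 0 < ρ) (q : ℤ × ℤ → ℂ)
    (hq : Summable (fun n : ℤ × ℤ => Real.exp (ρ * latNorm n) * ‖q n‖))
    (d j k : ℤ × ℤ) (h : latNorm d ≤ latNorm j + latNorm k) :
    ‖q j‖ * ‖q k‖ ≤
      Real.exp (-ρ * latNorm d) * (Real.exp (ρ * latNorm j) * ‖q j‖) * wnorm ρ q := by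
  have hk : Real.exp (ρ * latNorm k) * ‖q k‖ ≤ wnorm ρ q :=
    Summable.le_tsum hq k fun _ _ => by positivity
  have h1 : (1 : ℝ) ≤ Real.exp (-ρ * latNorm d + ρ * latNorm j + ρ * latNorm k) :=
    Real.one_le_exp (by nlinarith [hρ.le])
  calc ‖q j‖ * ‖q k‖ ≤
        Real.exp (-ρ * latNorm d + ρ * latNorm j + ρ * latNorm k) * (‖q j‖ * ‖q k‖) :=
        le_mul_of_one_le_left (by positivity) h1
    _ = Real.exp (-ρ * latNorm d) * (Real.exp (ρ * latNorm j) * ‖q j‖) *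
          (Real.exp (ρ * latNorm k) * ‖q k‖) := by
        rw [Real.exp_add, Real.exp_add]; ring
    _ ≤ Real.exp (-ρ * latNorm d) * (Real.exp (ρ * latNorm j) * ‖q j‖) * wnorm ρ q :=
        mul_le_mul_of_nonneg_left hk (by positivity)

/-- Summability of the majorant. -/
lemma maj_summable (ρ : ℝ) (q : ℤ × ℤ → ℂ)
    (hq : Summable (fun n : ℤ × ℤ => Real.exp (ρ * latNorm n) * ‖q n‖)) (d : ℤ × ℤ) :
    Summable (fun j : ℤ × ℤ =>
      Real.exp (-ρ * latNorm d) * (Real.exp (ρ * latNorm j) * ‖q j‖) * wnorm ρ q) :=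
  (hq.mul_left _).mul_right _

lemma maj_tsum (ρ : ℝ) (q : ℤ × ℤ → ℂ) (d : ℤ × ℤ) :
    (∑' j : ℤ × ℤ,
      Real.exp (-ρ * latNorm d) * (Real.exp (ρ * latNorm j) * ‖q j‖) * wnorm ρ q)
      = Real.exp (-ρ * latNorm d) * (wnorm ρ q) ^ 2 := by
  rw [tsum_mul_right, tsum_mul_left, wnorm, sq]; ring

/-- Töplitz–Lipschitz property of the cubic nonlinearity: the sums `A(d)`, `B(d)`
converge absolutely with exponential decay `e^{−ρ|d|}‖q‖_ρ²`; the partial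
derivatives `∂(Qq)_{n+tc}/∂q_{m+tc} = 2A(n−m)` and
`∂(Qq)_{n+tc}/∂conj(q_{m−tc}) = B(n+m)` are independent of `t`, so the limits as
`t → ∞` exist and obey the bounds `2e^{−ρ|n−m|}‖q‖_ρ²` and `e^{−ρ|n+m|}‖q‖_ρ²`. -/
theorem cubic_toplitz_lipschitz (ρ : ℝ) (hρ : 0 < ρ) (q : ℤ × ℤ → ℂ)
    (hq : Summable (fun n : ℤ × ℤ => Real.exp (ρ * latNorm n) * ‖q n‖)) :
    (∀ d : ℤ × ℤ, Summable (fun j : ℤ × ℤ => ‖q j * (starRingEnd ℂ) (q (j - d))‖)) ∧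
    (∀ d : ℤ × ℤ, Summable (fun i : ℤ × ℤ => ‖q i * q (d - i)‖)) ∧
    (∀ d : ℤ × ℤ, ‖Aq q d‖ ≤ Real.exp (-ρ * latNorm d) * (wnorm ρ q) ^ 2) ∧
    (∀ d : ℤ × ℤ, ‖Bq q d‖ ≤ Real.exp (-ρ * latNorm d) * (wnorm ρ q) ^ 2) ∧
    (∀ (n m c : ℤ × ℤ) (t : ℤ),
      2 * Aq q ((n + t • c) - (m + t • c)) = 2 * Aq q (n - m) ∧
      Bq q ((n + t • c) + (m - t • c)) = Bq q (n + m)) ∧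
    (∀ n m : ℤ × ℤ,
      ‖2 * Aq q (n - m)‖ ≤ 2 * Real.exp (-ρ * latNorm (n - m)) * (wnorm ρ q) ^ 2 ∧
      ‖Bq q (n + m)‖ ≤ Real.exp (-ρ * latNorm (n + m)) * (wnorm ρ q) ^ 2) := by
  -- pointwise bounds for the A-terms
  have hA_pt : ∀ d j : ℤ × ℤ, ‖q j * (starRingEnd ℂ) (q (j - d))‖ ≤
      Real.exp (-ρ * latNorm d) * (Real.exp (ρ * latNorm j) * ‖q j‖) * wnorm ρ q := by
    intro d j
    rw [norm_mul, RCLike.norm_conj]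
    exact term_bound ρ hρ q hq d j (j - d) (by simpa using latNorm_sub_le j (j - d))
  -- pointwise bounds for the B-terms
  have hB_pt : ∀ d i : ℤ × ℤ, ‖q i * q (d - i)‖ ≤
      Real.exp (-ρ * latNorm d) * (Real.exp (ρ * latNorm i) * ‖q i‖) * wnorm ρ q := by
    intro d i
    rw [norm_mul]
    exact term_bound ρ hρ q hq d i (d - i) (by simpa using latNorm_add_le i (d - i))
  have hsA : ∀ d : ℤ × ℤ, Summable (fun j : ℤ × ℤ => ‖q j * (starRingEnd ℂ) (q (j - d))‖) :=
    fun d => Summable.of_nonneg_of_le (fun _ => norm_nonneg _) (hA_pt d) (maj_summable ρ q hq d)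
  have hsB : ∀ d : ℤ × ℤ, Summable (fun i : ℤ × ℤ => ‖q i * q (d - i)‖) :=
    fun d => Summable.of_nonneg_of_le (fun _ => norm_nonneg _) (hB_pt d) (maj_summable ρ q hq d)
  have hAb : ∀ d : ℤ × ℤ, ‖Aq q d‖ ≤ Real.exp (-ρ * latNorm d) * (wnorm ρ q) ^ 2 := by
    intro d
    calc ‖Aq q d‖ ≤ ∑' j : ℤ × ℤ, ‖q j * (starRingEnd ℂ) (q (j - d))‖ :=
          norm_tsum_le_tsum_norm (hsA d)
      _ ≤ ∑' j : ℤ × ℤ,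
            Real.exp (-ρ * latNorm d) * (Real.exp (ρ * latNorm j) * ‖q j‖) * wnorm ρ q :=
          Summable.tsum_le_tsum (hA_pt d) (hsA d) (maj_summable ρ q hq d)
      _ = Real.exp (-ρ * latNorm d) * (wnorm ρ q) ^ 2 := maj_tsum ρ q d
  have hBb : ∀ d : ℤ × ℤ, ‖Bq q d‖ ≤ Real.exp (-ρ * latNorm d) * (wnorm ρ q) ^ 2 := by
    intro d
    calc ‖Bq q d‖ ≤ ∑' i : ℤ × ℤ, ‖q i * q (d - i)‖ := norm_tsum_le_tsum_norm (hsB d)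
      _ ≤ ∑' i : ℤ × ℤ,
            Real.exp (-ρ * latNorm d) * (Real.exp (ρ * latNorm i) * ‖q i‖) * wnorm ρ q :=
          Summable.tsum_le_tsum (hB_pt d) (hsB d) (maj_summable ρ q hq d)
      _ = Real.exp (-ρ * latNorm d) * (wnorm ρ q) ^ 2 := maj_tsum ρ q d
  refine ⟨hsA, hsB, hAb, hBb, ?_, ?_⟩
  · intro n m c t
    constructor
    · congr 2; abel
    · congr 1; abel
  · intro n m
    refine ⟨?_, hBb (n + m)⟩
    rw [norm_mul]
    have h2 : ‖(2 : ℂ)‖ = 2 := by norm_num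
    rw [h2, mul_assoc]
    exact mul_le_mul_of_nonneg_left (hAb (n - m)) (by norm_num)
end

section
/- Let b ≥ 1, let c ∈ ℝ^b and γ ∈ ℝ, and define the affine map f : ℝ^b → ℝ by f(ξ) = γ + Σ_{a=1}^b k_a ω_a(ξ), where ω_a(ξ) = c_a + (1/4π²)ξ_a + (1/2π²)Σ_{a'≠a}ξ_{a'} and k ∈ ℤ^b is a nonzero integer vector. Then for every δ > 0, the Lebesgue measure of the set {ξ ∈ [0,1]^b : |f(ξ)| < δ} is at most 8π²δ. -/
open Real MeasureTheory

/-- On the real line, the set where an affine function `x ↦ A + m x` with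
`|m| ≥ m0 > 0` is smaller than `δ` in absolute value has measure at most `2δ/m0`. -/
lemma melnikov_section_bound (A m δ m0 : ℝ) (hm0 : 0 < m0) (hm : m0 ≤ |m|) (hδ : 0 < δ) :
    volume {x : ℝ | |A + m * x| < δ} ≤ ENNReal.ofReal (2 * (δ / m0)) := by
  have hmpos : 0 < |m| := lt_of_lt_of_le hm0 hm
  have hmne : m ≠ 0 := abs_pos.mp hmpos
  have hsub : {x : ℝ | |A + m * x| < δ} ⊆ Metric.ball (-(A / m)) (δ / m0) := by
    intro x hx
    simp only [Set.mem_setOf_eq] at hx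
    simp only [Metric.mem_ball, Real.dist_eq]
    have h1 : x - -(A / m) = (A + m * x) / m := by field_simp; ring
    rw [h1, abs_div]
    calc |A + m * x| / |m| < δ / |m| := div_lt_div_of_pos_right hx hmpos
      _ ≤ δ / m0 := by gcongr
  calc volume {x : ℝ | |A + m * x| < δ} ≤ volume (Metric.ball (-(A / m)) (δ / m0)) :=
        measure_mono hsub
    _ = ENNReal.ofReal (2 * (δ / m0)) := by rw [Real.volume_ball]

/-- Fubini-type estimate: if some coefficient `m i` of an affine function on the
cube satisfies `|m i| ≥ m0 > 0`, then the set where the function is `δ`-small has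
measure at most `2δ/m0`. -/
lemma melnikov_cube_bound (n : ℕ) (m : Fin (n + 1) → ℝ) (C : ℝ) (i : Fin (n + 1)) (m0 δ : ℝ)
    (hm0 : 0 < m0) (hmi : m0 ≤ |m i|) (hδ : 0 < δ) :
    volume {ξ : Fin (n + 1) → ℝ |
        (∀ a, ξ a ∈ Set.Icc (0 : ℝ) 1) ∧ |C + ∑ a, m a * ξ a| < δ}
      ≤ ENNReal.ofReal (2 * (δ / m0)) := by
  set S : Set (Fin (n + 1) → ℝ) :=
    {ξ | (∀ a, ξ a ∈ Set.Icc (0 : ℝ) 1) ∧ |C + ∑ a, m a * ξ a| < δ} with hS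
  have hSm : MeasurableSet S := by
    rw [hS, Set.setOf_and, Set.setOf_forall]
    exact (MeasurableSet.iInter fun a => (measurable_pi_apply a) measurableSet_Icc).inter
      (measurableSet_lt (Measurable.abs
        ((Finset.measurable_sum _ fun a _ =>
          (measurable_pi_apply a).const_mul _).const_add _)) measurable_const)
  set e := MeasurableEquiv.piFinSuccAbove (fun _ : Fin (n + 1) => ℝ) i with he
  have hvp : MeasurePreserving e := volume_preserving_piFinSuccAbove _ i
  have hT : MeasurableSet (e.symm ⁻¹' S) := e.symm.measurable hSm
  have h1 : volume S = (volume.prod volume) (e.symm ⁻¹' S) := by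
    rw [← Measure.volume_eq_prod, ← hvp.measure_preimage hT.nullMeasurableSet]
    congr 1
    ext ξ
    simp
  rw [h1, Measure.prod_apply_symm hT]
  have hsymm : ∀ x : ℝ, ∀ y : Fin n → ℝ,
      e.symm (x, y) = Fin.insertNth (α := fun _ => ℝ) i x y := fun x y => by
    simp [he, MeasurableEquiv.piFinSuccAbove_symm_apply, Fin.insertNthEquiv]
  have hsum : ∀ x : ℝ, ∀ y : Fin n → ℝ,
      ∑ a, m a * Fin.insertNth (α := fun _ => ℝ) i x y a
        = m i * x + ∑ j, m (i.succAbove j) * y j := fun x y => by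
    rw [Fin.sum_univ_succAbove (fun a => m a * Fin.insertNth (α := fun _ => ℝ) i x y a) i]
    simp
  have hsec : ∀ y : Fin n → ℝ,
      volume ((fun x => (x, y)) ⁻¹' (e.symm ⁻¹' S))
        ≤ (Set.univ.pi fun _ : Fin n => Set.Icc (0 : ℝ) 1).indicator
            (fun _ => ENNReal.ofReal (2 * (δ / m0))) y := by
    intro y
    by_cases hy : y ∈ Set.univ.pi fun _ : Fin n => Set.Icc (0 : ℝ) 1
    · rw [Set.indicator_of_mem hy]
      refine le_trans (measure_mono ?_)
        (melnikov_section_bound (C + ∑ j, m (i.succAbove j) * y j) (m i) δ m0 hm0 hmi hδ)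
      intro x hx
      simp only [Set.mem_preimage, hsymm] at hx
      obtain ⟨-, hx2⟩ := hx
      rw [hsum] at hx2
      simp only [Set.mem_setOf_eq]
      calc |C + ∑ j, m (i.succAbove j) * y j + m i * x|
          = |C + (m i * x + ∑ j, m (i.succAbove j) * y j)| := by ring_nf
        _ < δ := hx2
    · rw [Set.indicator_of_notMem hy]
      have hempty : (fun x => (x, y)) ⁻¹' (e.symm ⁻¹' S) = ∅ := by
        ext x
        simp only [Set.mem_preimage, hsymm, Set.mem_empty_iff_false, iff_false]
        rintro ⟨h1, -⟩
        refine hy fun j _ => ?_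
        simpa using h1 (i.succAbove j)
      simp [hempty]
  calc ∫⁻ y, volume ((fun x => (x, y)) ⁻¹' (e.symm ⁻¹' S))
      ≤ ∫⁻ y, (Set.univ.pi fun _ : Fin n => Set.Icc (0 : ℝ) 1).indicator
            (fun _ => ENNReal.ofReal (2 * (δ / m0))) y := lintegral_mono hsec
    _ = ENNReal.ofReal (2 * (δ / m0))
          * volume (Set.univ.pi fun _ : Fin n => Set.Icc (0 : ℝ) 1) := by
        rw [lintegral_indicator_const (MeasurableSet.univ_pi fun _ => measurableSet_Icc)]
    _ = ENNReal.ofReal (2 * (δ / m0)) := by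
        rw [volume_pi_pi]
        simp [Real.volume_Icc]

/-- Rewriting the Melnikov frequency combination as an affine function of `ξ`. -/
lemma melnikov_affine_rw (n : ℕ) (c : Fin (n + 1) → ℝ) (γ : ℝ) (k : Fin (n + 1) → ℤ)
    (ξ : Fin (n + 1) → ℝ) :
    γ + ∑ a, (k a : ℝ) *
        (c a + (1 / (4 * π ^ 2)) * ξ a
          + (1 / (2 * π ^ 2)) * ∑ a' ∈ Finset.univ.filter (· ≠ a), ξ a')
      = (γ + ∑ a, (k a : ℝ) * c a)
        + ∑ a, (((2 * (∑ a', (k a' : ℝ)) - k a) / (4 * π ^ 2)) * ξ a) := by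
  have hπ : (π : ℝ) ≠ 0 := Real.pi_ne_zero
  have h1 : ∀ a : Fin (n + 1), ∑ a' ∈ Finset.univ.filter (· ≠ a), ξ a'
      = (∑ a', ξ a') - ξ a := fun a => by
    rw [Finset.filter_ne', Finset.sum_erase_eq_sub (Finset.mem_univ a)]
  simp only [h1]
  set T := ∑ a', ξ a' with hT
  set K := ∑ a, (k a : ℝ) * ξ a with hK
  set Sk := ∑ a', (k a' : ℝ) with hSk
  have hL : ∑ a, (k a : ℝ) * (c a + (1 / (4 * π ^ 2)) * ξ a + (1 / (2 * π ^ 2)) * (T - ξ a))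
      = (∑ a, (k a : ℝ) * c a) + (1 / (4 * π ^ 2)) * K
        + (1 / (2 * π ^ 2)) * (T * Sk - K) := by
    calc ∑ a, (k a : ℝ) * (c a + (1 / (4 * π ^ 2)) * ξ a + (1 / (2 * π ^ 2)) * (T - ξ a))
        = ∑ a, ((k a : ℝ) * c a + (1 / (4 * π ^ 2)) * ((k a : ℝ) * ξ a)
            + (1 / (2 * π ^ 2)) * (T * (k a : ℝ) - (k a : ℝ) * ξ a)) :=
          Finset.sum_congr rfl fun a _ => by ring
      _ = _ := by
          rw [Finset.sum_add_distrib, Finset.sum_add_distrib, ← Finset.mul_sum,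
            ← Finset.mul_sum, Finset.sum_sub_distrib, ← Finset.mul_sum]
  have hR : ∑ a, (((2 * Sk - (k a : ℝ)) / (4 * π ^ 2)) * ξ a)
      = (2 * Sk * T - K) / (4 * π ^ 2) := by
    calc ∑ a, (((2 * Sk - (k a : ℝ)) / (4 * π ^ 2)) * ξ a)
        = ∑ a, ((2 * Sk * ξ a - (k a : ℝ) * ξ a) / (4 * π ^ 2)) :=
          Finset.sum_congr rfl fun a _ => by ring
      _ = _ := by
          rw [← Finset.sum_div, Finset.sum_sub_distrib, ← Finset.mul_sum]
  rw [hL, hR]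
  field_simp
  ring

/-- Measure estimate for the first Melnikov condition: for a nonzero integer
vector `k` and the affine frequency map
`ω_a(ξ) = c_a + ξ_a/(4π²) + (1/2π²) Σ_{a'≠a} ξ_{a'}`, the set of parameters
`ξ` in the unit cube where `|γ + ⟨k, ω(ξ)⟩| < δ` has Lebesgue measure at most
`8π²δ`. -/
theorem melnikov_measure_estimate (b : ℕ) (hb : 1 ≤ b) (c : Fin b → ℝ) (γ : ℝ)
    (k : Fin b → ℤ) (hk : k ≠ 0) (δ : ℝ) (hδ : 0 < δ) :
    volume {ξ : Fin b → ℝ |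
        (∀ a, ξ a ∈ Set.Icc (0 : ℝ) 1) ∧
        |γ + ∑ a : Fin b, (k a : ℝ) *
            (c a + (1 / (4 * π ^ 2)) * ξ a
              + (1 / (2 * π ^ 2)) * ∑ a' ∈ Finset.univ.filter (· ≠ a), ξ a')| < δ}
      ≤ ENNReal.ofReal (8 * π ^ 2 * δ) := by
  obtain ⟨n, rfl⟩ : ∃ n, b = n + 1 := ⟨b - 1, by omega⟩
  have hπ2 : (0 : ℝ) < π ^ 2 := by positivity
  -- the integer sum and the coefficients
  set SZ : ℤ := ∑ a, k a with hSZ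
  -- there is a coefficient with `2 SZ - k i ≠ 0`
  have hex : ∃ i : Fin (n + 1), 2 * SZ - k i ≠ 0 := by
    by_contra h
    push_neg at h
    have hki : ∀ i, k i = 2 * SZ := fun i => by have := h i; omega
    have hsum : SZ = (n + 1 : ℤ) * (2 * SZ) := by
      conv_lhs => rw [hSZ]
      rw [Finset.sum_congr rfl fun i _ => hki i]
      simp [Finset.sum_const, Finset.card_univ, mul_comm]
    have hS0 : SZ = 0 := by
      have h2 : SZ * (1 - 2 * ((n : ℤ) + 1)) = 0 := by linear_combination hsum
      rcases mul_eq_zero.mp h2 with h3 | h3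
      · exact h3
      · omega
    apply hk
    funext i
    simp [hki i, hS0]
  obtain ⟨i, hi⟩ := hex
  have hiabs : (1 : ℝ) ≤ |((2 * SZ - k i : ℤ) : ℝ)| := by
    rw [← Int.cast_abs]
    exact_mod_cast Int.one_le_abs hi
  -- rewrite the set using the affine form
  have hset : {ξ : Fin (n + 1) → ℝ |
        (∀ a, ξ a ∈ Set.Icc (0 : ℝ) 1) ∧
        |γ + ∑ a : Fin (n + 1), (k a : ℝ) *
            (c a + (1 / (4 * π ^ 2)) * ξ a
              + (1 / (2 * π ^ 2)) * ∑ a' ∈ Finset.univ.filter (· ≠ a), ξ a')| < δ}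
      = {ξ : Fin (n + 1) → ℝ |
        (∀ a, ξ a ∈ Set.Icc (0 : ℝ) 1) ∧
        |(γ + ∑ a, (k a : ℝ) * c a)
          + ∑ a, (((2 * (∑ a', (k a' : ℝ)) - k a) / (4 * π ^ 2)) * ξ a)| < δ} := by
    ext ξ
    rw [Set.mem_setOf_eq, Set.mem_setOf_eq, melnikov_affine_rw n c γ k ξ]
  rw [hset]
  have hm0 : (0 : ℝ) < 1 / (4 * π ^ 2) := by positivity
  have hmi : 1 / (4 * π ^ 2) ≤ |(2 * (∑ a', (k a' : ℝ)) - k i) / (4 * π ^ 2)| := by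
    rw [abs_div, abs_of_pos (by positivity : (0:ℝ) < 4 * π ^ 2)]
    apply div_le_div_of_nonneg_right ?_ (by positivity)
    · calc (1 : ℝ) ≤ |((2 * SZ - k i : ℤ) : ℝ)| := hiabs
        _ = |2 * (∑ a', (k a' : ℝ)) - k i| := by push_cast [hSZ]; ring_nf
  have := melnikov_cube_bound n
      (fun a => (2 * (∑ a', (k a' : ℝ)) - k a) / (4 * π ^ 2))
      (γ + ∑ a, (k a : ℝ) * c a) i (1 / (4 * π ^ 2)) δ hm0 hmi hδ
  refine le_trans this (le_of_eq ?_)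
  congr 1
  field_simp
  ring
end
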